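/- For every natural number n ≥ 4, with a = √((n−1)/(n(n−2))), b = 1/√(2n), and c = 1/√2, the 2×2 real matrix with rows X = (a, 0) and Y = (b, c) has smallest singular value exactly 1/√n, and the same holds for the 2×2 matrices with rows (X, Z) and with rows (Y, Z), where Z = (b, −c). -/

import Mathlib

open Matrix

/-- The smallest singular value of a `2 × 2` real matrix `Q`: the square root of the
smallest eigenvalue of `Q * Qᵀ` (for a `2 × 2` real positive semidefinite matrix `S`, the
smallest eigenvalue equals `(trace S - √((trace S)² - 4 det S)) / 2`). -/
noncomputable def sigma2 (Q : Matrix (Fin 2) (Fin 2) ℝ) : ℝ :=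
  Real.sqrt ((Matrix.trace (Q * Qᵀ) -
    Real.sqrt ((Matrix.trace (Q * Qᵀ)) ^ 2 - 4 * (Q * Qᵀ).det)) / 2)

/-!
For each of the three matrices `Q`, the Gram matrix `Q Qᵀ` has trace `1/n + μ` and
determinant `μ/n` for an explicit `μ ≥ 1/n` (namely `μ = (n-1)/(2(n-2))` for the rows `X, Y`
and `X, Z`, and `μ = 1` for the rows `Y, Z`), so its eigenvalues are `1/n ≤ μ`.
-/

lemma trace_mul_transpose_fin_two {R : Type*} [CommRing R] (p q r s : R) :
    trace (!![p, q; r, s] * !![p, q; r, s]ᵀ) = p ^ 2 + q ^ 2 + r ^ 2 + s ^ 2 := by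
  simp only [trace_fin_two, mul_apply, Fin.sum_univ_two, transpose_apply, of_apply,
    cons_val', cons_val_zero, cons_val_one, cons_val_fin_one, empty_val']
  ring

lemma det_mul_transpose_fin_two {R : Type*} [CommRing R] (p q r s : R) :
    (!![p, q; r, s] * !![p, q; r, s]ᵀ).det = (p * s - q * r) ^ 2 := by
  rw [det_mul, det_transpose, det_fin_two_of]
  ring

lemma sigma2_eq_sqrt_of_trace_det {Q : Matrix (Fin 2) (Fin 2) ℝ} {l m : ℝ} (hlm : l ≤ m)
    (htr : trace (Q * Qᵀ) = l + m) (hdet : (Q * Qᵀ).det = l * m) :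
    sigma2 Q = Real.sqrt l := by
  have hdisc : (l + m) ^ 2 - 4 * (l * m) = (m - l) ^ 2 := by ring
  rw [sigma2, htr, hdet, hdisc, Real.sqrt_sq (sub_nonneg.mpr hlm)]
  congr 1
  ring

lemma sigma2_fin_two_eq_sqrt {p q r s l m : ℝ} (hlm : l ≤ m)
    (htr : p ^ 2 + q ^ 2 + r ^ 2 + s ^ 2 = l + m) (hdet : (p * s - q * r) ^ 2 = l * m) :
    sigma2 !![p, q; r, s] = Real.sqrt l :=
  sigma2_eq_sqrt_of_trace_det hlm (by rw [trace_mul_transpose_fin_two, htr])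
    (by rw [det_mul_transpose_fin_two, hdet])

theorem stmt_19 (n : ℕ) (hn : 4 ≤ n) (a b c : ℝ)
    (ha : a = Real.sqrt (((n : ℝ) - 1) / ((n : ℝ) * ((n : ℝ) - 2))))
    (hb : b = 1 / Real.sqrt (2 * (n : ℝ))) (hc : c = 1 / Real.sqrt 2) :
    sigma2 !![a, 0; b, c] = 1 / Real.sqrt n ∧
    sigma2 !![a, 0; b, -c] = 1 / Real.sqrt n ∧
    sigma2 !![b, c; b, -c] = 1 / Real.sqrt n := by
  have hN : (4 : ℝ) ≤ n := by exact_mod_cast hn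
  set N : ℝ := (n : ℝ)
  have hN2 : N - 2 ≠ 0 := by linarith
  have ha2 : a ^ 2 = (N - 1) / (N * (N - 2)) := by
    rw [ha, Real.sq_sqrt (div_nonneg (by linarith) (by nlinarith))]
  have hb2 : b ^ 2 = 1 / (2 * N) := by rw [hb, div_pow, one_pow, Real.sq_sqrt (by positivity)]
  have hc2 : c ^ 2 = 1 / 2 := by rw [hc, div_pow, one_pow, Real.sq_sqrt (by norm_num)]
  have hμ : 1 / N ≤ (N - 1) / (2 * (N - 2)) := by
    rw [div_le_div_iff₀ (by positivity) (by linarith)]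
    nlinarith
  rw [one_div, ← Real.sqrt_inv, ← one_div]
  refine ⟨sigma2_fin_two_eq_sqrt hμ ?_ ?_, sigma2_fin_two_eq_sqrt hμ ?_ ?_,
    sigma2_fin_two_eq_sqrt (m := 1) (div_le_one_of_le₀ (by linarith) (by positivity)) ?_ ?_⟩
  · rw [ha2, hb2, hc2]; field_simp; ring
  · linear_combination (norm := skip) c ^ 2 * ha2 + (N - 1) / (N * (N - 2)) * hc2
    field_simp; ring
  · rw [neg_sq, ha2, hb2, hc2]; field_simp; ring
  · linear_combination (norm := skip) c ^ 2 * ha2 + (N - 1) / (N * (N - 2)) * hc2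
    field_simp; ring
  · rw [neg_sq, hb2, hc2]; field_simp; ring
  · linear_combination (norm := skip) 4 * c ^ 2 * hb2 + 4 / (2 * N) * hc2
    field_simp; ring
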